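/- arXiv:1906.08145 — 3 statements merged into one kernel-verified Lean document; each statement's English description precedes it below -/
import Mathlib

section
/- If a set S of incomparable pairs of a finite poset P contains no alternating cycle of any length k ≥ 2, then S is reversible, i.e., there exists a linear extension of P reversing every pair in S. -/
variable {α : Type*}

/-- `L` is a linear extension of the partial order on `α`. -/
def IsLinExt [PartialOrder α] (L : LinearOrder α) : Prop :=
  ∀ x y : α, x ≤ y → L.le x y

/-- The set of ordered incomparable pairs of the poset `α`. -/
def Inc (α : Type*) [PartialOrder α] : Set (α × α) :=
  {p | ¬ p.1 ≤ p.2 ∧ ¬ p.2 ≤ p.1}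

/-- `L` reverses every pair of `S`. -/
def Reverses [PartialOrder α] (L : LinearOrder α) (S : Set (α × α)) : Prop :=
  ∀ p ∈ S, L.lt p.2 p.1

/-- `S` is reversible: some linear extension reverses all its pairs. -/
def Reversible [PartialOrder α] (S : Set (α × α)) : Prop :=
  ∃ L : LinearOrder α, IsLinExt L ∧ Reverses L S

/-- An alternating cycle of length `k ≥ 2` contained in `S`, indexed cyclically. -/
def IsAltCycle [PartialOrder α] (S : Set (α × α)) (k : ℕ) (x y : ZMod k → α) : Prop :=
  2 ≤ k ∧ (∀ i, (x i, y i) ∈ S) ∧ ∀ i, x i ≤ y (i + 1)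

/-- A strict alternating cycle: `x i ≤ y j` iff `j = i + 1`, and the `x`'s and `y`'s
form `k`-element antichains. -/
def IsStrictAltCycle [PartialOrder α] (S : Set (α × α)) (k : ℕ) (x y : ZMod k → α) : Prop :=
  IsAltCycle S k x y ∧ (∀ i j, x i ≤ y j ↔ j = i + 1) ∧
  Function.Injective x ∧ Function.Injective y ∧
  (∀ i j : ZMod k, i ≠ j → ¬ x i ≤ x j) ∧ (∀ i j : ZMod k, i ≠ j → ¬ y i ≤ y j)

/-- `α` has a realizer consisting of `d` linear extensions. -/
def HasRealizer (α : Type*) [PartialOrder α] (d : ℕ) : Prop :=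
  ∃ f : Fin d → LinearOrder α, (∀ i, IsLinExt (f i)) ∧
    ∀ x y : α, x ≤ y ↔ ∀ i, (f i).le x y

/-- The (Dushnik–Miller) dimension of the poset `α`. -/
noncomputable def pdim (α : Type*) [PartialOrder α] : ℕ :=
  sInf {d | 0 < d ∧ HasRealizer α d}

/-! Every linear extension reversing `S` contains the relation `a < b ∨ (b, a) ∈ S`. A cycle of
this relation is not a `<`-cycle, so it passes through pairs of `S`; merging the `≤`-steps between
consecutive such pairs `(xᵢ, yᵢ)` gives `xᵢ ≤ yᵢ₊₁`, an alternating cycle (of length at least 2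
after going around twice). Hence the relation is acyclic, its reflexive-transitive closure is a
partial order, and by Szpilrajn's theorem it has a linear extension, which reverses `S`. -/

namespace Relation

variable {β : Type*} {r : β → β → Prop}

theorem ReflTransGen.exists_seq {a b : β} (h : ReflTransGen r a b) :
    ∃ n, ∃ f : ℕ → β, f 0 = a ∧ f n = b ∧ ∀ i < n, r (f i) (f (i + 1)) := by
  induction h using ReflTransGen.head_induction_on with
  | refl => exact ⟨0, fun _ => b, rfl, rfl, by simp⟩
  | @head a c hac _ ih =>
    obtain ⟨n, f, rfl, rfl, hf⟩ := ih
    refine ⟨n + 1, fun i => if i = 0 then a else f (i - 1), rfl, rfl, ?_⟩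
    rintro (_ | i) hi
    · simpa using hac
    · simpa using hf i (by omega)

theorem TransGen.exists_zmod_cycle {a : β} (h : TransGen r a a) :
    ∃ n, ∃ g : ZMod (n + 1) → β, ∀ i, r (g i) (g (i + 1)) := by
  obtain ⟨b, hab, hba⟩ := TransGen.tail'_iff.mp h
  obtain ⟨n, f, rfl, rfl, hf⟩ := hab.exists_seq
  refine ⟨n, fun i => f i.val, ?_⟩
  change ∀ i : Fin (n + 1), r (f i) (f ↑(i + 1))
  intro i
  rw [Fin.val_add_one]
  split_ifs with hi
  · simpa [hi] using hba
  · exact hf i (Fin.val_lt_last hi)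

theorem isPartialOrder_reflTransGen (h : ∀ a, ¬ TransGen r a a) :
    IsPartialOrder β (ReflTransGen r) :=
  { (inferInstance : IsPreorder β (ReflTransGen r)) with
    antisymm := fun a b hab hba => by
      rcases reflTransGen_iff_eq_or_transGen.mp hab with rfl | hab
      · rfl
      rcases reflTransGen_iff_eq_or_transGen.mp hba with rfl | hba
      · rfl
      · exact absurd (hab.trans hba) (h a) }

end Relation

theorem exists_linearOrder_extending {β : Type*} (r : β → β → Prop) [IsPartialOrder β r] :
    ∃ L : LinearOrder β, ∀ a b, r a b → L.le a b := by
  obtain ⟨s, hs, hrs⟩ := extend_partialOrder r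
  exact ⟨{ le := s
           lt := fun a b => s a b ∧ ¬ s b a
           le_refl := hs.refl
           le_trans := fun _ _ _ => hs.trans _ _ _
           le_antisymm := fun _ _ => hs.antisymm _ _
           le_total := hs.total
           toDecidableLE := Classical.decRel s }, hrs⟩

section Reversal

variable [PartialOrder α] (S : Set (α × α))

def ReversalStep (a b : α) : Prop := a < b ∨ (b, a) ∈ S

def AltStep (p q : α × α) : Prop := p ∈ S ∧ p.1 ≤ q.2

variable {S}

theorem exists_isAltCycle_of_transGen_altStep {p : α × α}
    (h : Relation.TransGen (AltStep S) p p) : ∃ k x y, IsAltCycle S k x y := by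
  obtain ⟨n, g, hg⟩ := h.exists_zmod_cycle
  -- Going twice around the cycle makes its length at least 2.
  let π := ZMod.castHom (dvd_mul_left (n + 1) 2) (ZMod (n + 1))
  have hgπ (i : ZMod (2 * (n + 1))) : AltStep S (g (π i)) (g (π (i + 1))) := by
    simpa only [map_add, map_one] using hg (π i)
  exact ⟨2 * (n + 1), fun i => (g (π i)).1, fun i => (g (π i)).2, by omega,
    fun i => (hgπ i).1, fun i => (hgπ i).2⟩

theorem transGen_reversalStep_cases {a b : α} (h : Relation.TransGen (ReversalStep S) a b) :
    a < b ∨ ∃ p q, a ≤ p.2 ∧ Relation.ReflTransGen (AltStep S) p q ∧ q ∈ S ∧ q.1 ≤ b := by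
  induction h with
  | single h =>
    rcases h with hab | hba
    · exact .inl hab
    · exact .inr ⟨_, _, le_rfl, .refl, hba, le_rfl⟩
  | tail _ hbc ih =>
    rcases hbc with hbc | hcb
    · rcases ih with hab | ⟨p, q, hap, hpq, hq, hqb⟩
      · exact .inl (hab.trans hbc)
      · exact .inr ⟨p, q, hap, hpq, hq, hqb.trans hbc.le⟩
    · rcases ih with hab | ⟨p, q, hap, hpq, hq, hqb⟩
      · exact .inr ⟨_, _, hab.le, .refl, hcb, le_rfl⟩
      · exact .inr ⟨p, _, hap, hpq.tail ⟨hq, hqb⟩, hcb, le_rfl⟩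

theorem not_transGen_reversalStep_self (h : ∀ k x y, ¬ IsAltCycle S k x y) (a : α) :
    ¬ Relation.TransGen (ReversalStep S) a a := by
  intro ha
  rcases transGen_reversalStep_cases ha with haa | ⟨p, q, hap, hpq, hq, hqa⟩
  · exact haa.false
  · obtain ⟨k, x, y, hc⟩ := exists_isAltCycle_of_transGen_altStep (.tail' hpq ⟨hq, hqa.trans hap⟩)
    exact h k x y hc

end Reversal

theorem stmt_2_general [PartialOrder α] (S : Set (α × α))
    (h : ∀ (k : ℕ) (x y : ZMod k → α), ¬ IsAltCycle S k x y) :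
    Reversible S := by
  have acyclic := not_transGen_reversalStep_self h
  have := Relation.isPartialOrder_reflTransGen acyclic
  obtain ⟨L, hL⟩ := exists_linearOrder_extending (Relation.ReflTransGen (ReversalStep S))
  refine ⟨L, fun a b hab => hL a b ?_, fun p hp => ?_⟩
  · rcases hab.eq_or_lt with rfl | hab
    · exact .refl
    · exact .single (.inl hab)
  · have hstep : ReversalStep S p.2 p.1 := .inr hp
    exact @lt_of_le_of_ne _ L.toPartialOrder _ _ (hL _ _ (.single hstep))
      fun hp' => acyclic p.1 (.single (hp' ▸ hstep))

/-- If `S ⊆ Inc(P)` contains no alternating cycle of any length, then `S` is reversible. -/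
theorem stmt_2 [PartialOrder α] [Fintype α] (S : Set (α × α)) (hS : S ⊆ Inc α)
    (h : ∀ (k : ℕ) (x y : ZMod k → α), ¬ IsAltCycle S k x y) :
    Reversible S :=
  stmt_2_general S h
end

section
/- A set S of incomparable pairs of a finite poset P contains an alternating cycle (of some length k ≥ 2) if and only if it contains a strict alternating cycle (of some length k ≥ 2). -/
variable {α : Type*}

/-- `S` contains an alternating cycle iff it contains a strict alternating cycle. -/
theorem stmt_3 [PartialOrder α] [Fintype α] (S : Set (α × α)) (hS : S ⊆ Inc α) :
    (∃ (k : ℕ) (x y : ZMod k → α), IsAltCycle S k x y) ↔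
      (∃ (k : ℕ) (x y : ZMod k → α), IsStrictAltCycle S k x y) := by
  classical
  constructor
  · intro h
    let k := Nat.find h
    obtain ⟨x, y, hc⟩ : ∃ x y : ZMod k → α, IsAltCycle S k x y := Nat.find_spec h
    have hmin : ∀ m, m < k → ¬ ∃ x y : ZMod m → α, IsAltCycle S m x y :=
      fun m hm => Nat.find_min h hm
    obtain ⟨hk2, hmem, hstep⟩ := hc
    haveI : NeZero k := ⟨by omega⟩
    -- key claim: x a ≤ y b iff b = a + 1
    have key : ∀ a b : ZMod k, x a ≤ y b → b = a + 1 := by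
      intro a b hab
      by_contra hb
      have hba : a ≠ b := by
        rintro rfl
        exact (hS (hmem a)).1 hab
      set m := (a - b).val + 1 with hm
      have hvlt : (a - b).val < k := ZMod.val_lt _
      have habne : a - b ≠ 0 := sub_ne_zero.mpr hba
      have hvpos : 0 < (a - b).val := by
        rcases Nat.eq_zero_or_pos (a - b).val with h0 | h0
        · exact absurd ((ZMod.val_eq_zero _).mp h0) habne
        · exact h0
      have hm2 : 2 ≤ m := by omega
      have hmk : m < k := by
        rcases Nat.lt_or_ge ((a - b).val) (k - 1) with h1 | h1
        · omega
        · exfalso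
          have hv : (a - b).val = k - 1 := by omega
          have : a - b = ((k - 1 : ℕ) : ZMod k) := by
            rw [← hv, ZMod.natCast_zmod_val]
          have hneg : ((k - 1 : ℕ) : ZMod k) = -1 := by
            rw [Nat.cast_sub (by omega : (1:ℕ) ≤ k), ZMod.natCast_self, Nat.cast_one]
            ring
          rw [hneg] at this
          exact hb (by linear_combination -this)
      haveI : NeZero m := ⟨by omega⟩
      haveI : Fact (1 < m) := ⟨by omega⟩
      refine hmin m hmk ⟨fun t => x (b + ((t.val : ℕ) : ZMod k)),
        fun t => y (b + ((t.val : ℕ) : ZMod k)), hm2, fun t => hmem _, ?_⟩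
      intro t
      have htlt : t.val < m := ZMod.val_lt t
      show x (b + ((t.val : ℕ) : ZMod k)) ≤ y (b + (((t + 1).val : ℕ) : ZMod k))
      by_cases ht : t.val + 1 < m
      · have hval : (t + 1).val = t.val + 1 := by
          rw [ZMod.val_add, ZMod.val_one, Nat.mod_eq_of_lt ht]
        rw [hval]
        have := hstep (b + ((t.val : ℕ) : ZMod k))
        have heq : b + (((t.val + 1 : ℕ)) : ZMod k) = b + ((t.val : ℕ) : ZMod k) + 1 := by
          push_cast
          ring
        rw [heq]
        exact this
      · have htv : t.val = (a - b).val := by omega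
        have h1 : (t + 1).val = 0 := by
          rw [ZMod.val_add, ZMod.val_one, show t.val + 1 = m from by omega, Nat.mod_self]
        rw [h1]
        simp only [Nat.cast_zero, add_zero]
        rw [htv, ZMod.natCast_zmod_val]
        have : b + (a - b) = a := by ring
        rw [this]
        exact hab
    have hiff : ∀ a b : ZMod k, x a ≤ y b ↔ b = a + 1 := by
      intro a b
      exact ⟨key a b, by rintro rfl; exact hstep a⟩
    refine ⟨k, x, y, ⟨hk2, hmem, hstep⟩, hiff, ?_, ?_, ?_, ?_⟩
    · intro i j hij
      have : x i ≤ y (j + 1) := hij ▸ hstep j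
      have := key i (j + 1) this
      exact (add_left_injective 1 this).symm
    · intro i j hij
      have h1 : x (i - 1) ≤ y i := by
        have := hstep (i - 1)
        rwa [sub_add_cancel] at this
      have h2 : x (i - 1) ≤ y j := hij ▸ h1
      have := key (i - 1) j h2
      rw [this, sub_add_cancel]
    · intro i j hij hle
      have : x i ≤ y (j + 1) := le_trans hle (hstep j)
      have := key i (j + 1) this
      exact hij (add_left_injective 1 this.symm)
    · intro i j hij hle
      have h1 : x (i - 1) ≤ y i := by
        have := hstep (i - 1)
        rwa [sub_add_cancel] at this
      have h2 : x (i - 1) ≤ y j := le_trans h1 hle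
      have := key (i - 1) j h2
      rw [this, sub_add_cancel] at hij
      exact hij rfl
  · rintro ⟨k, x, y, hc, -⟩
    exact ⟨k, x, y, hc⟩
end

section
/- Let P be a finite poset with a linear extension L and suppose S ⊆ Inc(P) is such that for every (x,y) ∈ S there is a 'level' function a assigning to each (x,y) ∈ S an element a(y) of a fixed linear order M with the property: whenever (x,y), (x',y') ∈ S and x ≤ y' in P, then a(y') ≤ x < a(y) in M. Then S is reversible. -/
variable {α : Type*}

/-! Along an alternating step `q.1 ≤ p.2` between pairs of `S` the level drops strictly,
`a p.2 ≤ ι q.1 < a q.2`. Hence `≤` together with the reversed pairs of `S` generates no cycle,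
i.e. a partial order, and any linear extension of it (Szpilrajn) reverses `S`. -/

theorem exists_linearOrder_of_isPartialOrder (R : α → α → Prop) [IsPartialOrder α R] :
    ∃ L : LinearOrder α, ∀ x y, R x y → L.le x y := by
  obtain ⟨s, hs, hRs⟩ := extend_partialOrder R
  exact ⟨{ le := s
           lt := fun x y => s x y ∧ ¬ s y x
           le_refl := hs.refl
           le_trans := hs.trans
           le_antisymm := hs.antisymm
           le_total := hs.total
           lt_iff_le_not_ge := fun _ _ => Iff.rfl
           toDecidableLE := Classical.decRel _ }, hRs⟩

theorem reversible_of_isPartialOrder [PartialOrder α] {S : Set (α × α)}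
    (hS : ∀ p ∈ S, p.1 ≠ p.2) (R : α → α → Prop) [IsPartialOrder α R]
    (hle : ∀ x y : α, x ≤ y → R x y) (hrev : ∀ p ∈ S, R p.2 p.1) : Reversible S := by
  obtain ⟨L, hRL⟩ := exists_linearOrder_of_isPartialOrder R
  refine ⟨L, fun x y h => hRL x y (hle x y h), fun p hp => ?_⟩
  exact @lt_of_le_of_ne α L.toPartialOrder _ _ (hRL _ _ (hrev p hp)) (hS p hp).symm

section AltReach

variable [PartialOrder α] {β : Type*} [LinearOrder β] {S : Set (α × α)} {a : α → β}
  {u v w : α}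

/-- A path from `u` to `v` through `≤` and reversed pairs of `S` that reverses at least one pair:
`p` is the first reversed pair, `q` the last, and the level never rises in between. -/
def AltReach (S : Set (α × α)) (a : α → β) (u v : α) : Prop :=
  ∃ p ∈ S, ∃ q ∈ S, u ≤ p.2 ∧ q.1 ≤ v ∧ a q.2 ≤ a p.2

theorem AltReach.trans_le (h : AltReach S a u v) (hvw : v ≤ w) : AltReach S a u w :=
  let ⟨p, hp, q, hq, hup, hqv, hqp⟩ := h
  ⟨p, hp, q, hq, hup, hqv.trans hvw, hqp⟩

theorem AltReach.le_trans (huv : u ≤ v) (h : AltReach S a v w) : AltReach S a u w :=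
  let ⟨p, hp, q, hq, hvp, hqw, hqp⟩ := h
  ⟨p, hp, q, hq, huv.trans hvp, hqw, hqp⟩

theorem AltReach.trans (hlt : ∀ p ∈ S, ∀ q ∈ S, q.1 ≤ p.2 → a p.2 < a q.2)
    (h : AltReach S a u v) (h' : AltReach S a v w) : AltReach S a u w := by
  obtain ⟨p, hp, q, hq, hup, hqv, hqp⟩ := h
  obtain ⟨p', hp', q', hq', hvp', hqw', hqp'⟩ := h'
  exact ⟨p, hp, q', hq', hup, hqw', (hqp'.trans (hlt p' hp' q hq (hqv.trans hvp')).le).trans hqp⟩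

theorem AltReach.irrefl (hlt : ∀ p ∈ S, ∀ q ∈ S, q.1 ≤ p.2 → a p.2 < a q.2) :
    ¬ AltReach S a u u := by
  rintro ⟨p, hp, q, hq, hup, hqu, hqp⟩
  exact (hlt p hp q hq (hqu.trans hup)).not_ge hqp

/-- The order generated by `≤` and the reversed pairs of `S`, when the levels drop strictly. -/
def altReachOrder (S : Set (α × α)) (a : α → β) (u v : α) : Prop :=
  u ≤ v ∨ AltReach S a u v

theorem isPartialOrder_altReachOrder (hlt : ∀ p ∈ S, ∀ q ∈ S, q.1 ≤ p.2 → a p.2 < a q.2) :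
    IsPartialOrder α (altReachOrder S a) where
  refl _ := Or.inl le_rfl
  trans _ _ _
    | .inl huv, .inl hvw => .inl (huv.trans hvw)
    | .inl huv, .inr h => .inr (.le_trans huv h)
    | .inr h, .inl hvw => .inr (h.trans_le hvw)
    | .inr h, .inr h' => .inr (h.trans hlt h')
  antisymm _ _
    | .inl huv, .inl hvu => le_antisymm huv hvu
    | .inl huv, .inr h => (AltReach.irrefl hlt (.le_trans huv h)).elim
    | .inr h, .inl hvu => (AltReach.irrefl hlt (h.trans_le hvu)).elim
    | .inr h, .inr h' => (AltReach.irrefl hlt (h.trans hlt h')).elim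

end AltReach

theorem stmt_7_general [PartialOrder α] {β : Type*} [LinearOrder β]
    (S : Set (α × α)) (hS : S ⊆ Inc α) (ι : α → β) (a : α → β)
    (h1 : ∀ p ∈ S, ι p.1 < a p.2)
    (h2 : ∀ p ∈ S, ∀ q ∈ S, p.1 ≤ q.2 → a q.2 ≤ ι p.1) :
    Reversible S := by
  have hlt : ∀ p ∈ S, ∀ q ∈ S, q.1 ≤ p.2 → a p.2 < a q.2 :=
    fun p hp q hq h => (h2 q hq p hp h).trans_lt (h1 q hq)
  have := isPartialOrder_altReachOrder hlt
  exact reversible_of_isPartialOrder (fun p hp h => (hS hp).1 h.le) (altReachOrder S a)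
    (fun _ _ => Or.inl) (fun p hp => Or.inr ⟨p, hp, p, hp, le_rfl, le_rfl, le_rfl⟩)

/-- If elements can be mapped into a linear order `β` (via `ι`) with a level function `a`
such that every `(x,y) ∈ S` has `ι x < a y`, and any comparability `x ≤ y'` between pairs
of `S` forces `a y' ≤ ι x`, then `S` is reversible. -/
theorem stmt_7 [PartialOrder α] [Fintype α] {β : Type*} [LinearOrder β]
    (S : Set (α × α)) (hS : S ⊆ Inc α) (ι : α → β) (a : α → β)
    (h1 : ∀ p ∈ S, ι p.1 < a p.2)
    (h2 : ∀ p ∈ S, ∀ q ∈ S, p.1 ≤ q.2 → a q.2 ≤ ι p.1) :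
    Reversible S :=
  stmt_7_general S hS ι a h1 h2
end
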